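/- Let (X,μ) be a measure space, 2 ≤ q ≤ 3, and let u, r ∈ L^q(X,μ) with u ≥ 0, u + r ≥ 0, and ∫ u^(q-1)·r dμ = 0. Then ‖u+r‖_q² ≤ ‖u‖_q² + ‖u‖_q^(2-q)·( (q-1)·∫ u^(q-2)·r² dμ + (2/q)·∫ (max(r,0))^q dμ ). -/

import Mathlib

open Set MeasureTheory ENNReal

/-! Writing `b = a t`, the pointwise inequality
`(a + b)^q ≤ a^q + q a^(q-1) b + q(q-1)/2 a^(q-2) b² + (max b 0)^q` reduces to the same
inequality for `(1 + t)^q`, `t ≥ -1`. That one is proved by differentiating: for `t ≤ 0` the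
derivative of the difference has a sign by Bernoulli's inequality, and for `t ≥ 0` it reduces to
the analogous inequality one exponent lower, down to the subadditivity of `t ↦ t^s`, `s ≤ 1`.
Integrating, the first-order term vanishes by orthogonality, so `‖u + r‖_q^q ≤ ‖u‖_q^q + D`
with `D = q(q-1)/2 ∫ u^(q-2) r² + ∫ (max r 0)^q`, and Bernoulli's inequality for the concave
power `x ↦ x^(2/q)` turns this into
`‖u + r‖_q² ≤ ‖u‖_q² + (2/q) ‖u‖_q^(2-q) D`. -/

lemma hasDerivAt_one_add_rpow {p : ℝ} (hp : 1 ≤ p) (x : ℝ) :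
    HasDerivAt (fun s : ℝ => (1 + s) ^ p) (p * (1 + x) ^ (p - 1)) x := by
  simpa using ((hasDerivAt_id x).const_add 1).rpow_const (Or.inr hp)

lemma one_add_rpow_le_one_add_mul_add_rpow {p t : ℝ} (hp1 : 1 ≤ p) (hp2 : p ≤ 2)
    (ht : 0 ≤ t) :
    (1 + t) ^ p ≤ 1 + p * t + t ^ p := by
  set g : ℝ → ℝ := fun s => 1 + p * s + s ^ p - (1 + s) ^ p
  have hg : ∀ x, HasDerivAt g (p * (1 + x ^ (p - 1) - (1 + x) ^ (p - 1))) x :=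
    fun x => (((((hasDerivAt_id x).const_mul p).const_add 1).add
      (Real.hasDerivAt_rpow_const (Or.inr hp1))).sub
      (hasDerivAt_one_add_rpow hp1 x)).congr_deriv (by simp only [mul_one]; ring)
  have hmono : MonotoneOn g (Ici 0) := by
    refine monotoneOn_of_hasDerivWithinAt_nonneg (convex_Ici 0)
      (fun x _ => (hg x).continuousAt.continuousWithinAt)
      (fun x _ => (hg x).hasDerivWithinAt) fun x hx => ?_
    rw [interior_Ici] at hx
    have := Real.rpow_add_le_add_rpow zero_le_one hx.out.le (by linarith : 0 ≤ p - 1)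
      (by linarith)
    rw [Real.one_rpow] at this
    nlinarith
  have := hmono self_mem_Ici ht ht
  simp only [g, mul_zero, add_zero, Real.zero_rpow (by linarith : p ≠ 0), Real.one_rpow] at this
  linarith

lemma hasDerivAt_taylor_two {q x : ℝ} :
    HasDerivAt (fun s : ℝ => 1 + q * s + q * (q - 1) / 2 * s ^ 2) (q + q * (q - 1) * x) x :=
  ((((hasDerivAt_id x).const_mul q).const_add 1).add
    ((hasDerivAt_pow 2 x).const_mul (q * (q - 1) / 2))).congr_deriv (by simp; ring)

lemma one_add_rpow_le_taylor_two_add_rpow {q t : ℝ} (hq2 : 2 ≤ q) (hq3 : q ≤ 3)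
    (ht : 0 ≤ t) :
    (1 + t) ^ q ≤ 1 + q * t + q * (q - 1) / 2 * t ^ 2 + t ^ q := by
  set g : ℝ → ℝ := fun s => 1 + q * s + q * (q - 1) / 2 * s ^ 2 + s ^ q - (1 + s) ^ q
  have hq1 : 1 ≤ q := by linarith
  have hg : ∀ x, HasDerivAt g (q * (1 + (q - 1) * x + x ^ (q - 1) - (1 + x) ^ (q - 1))) x :=
    fun x => ((hasDerivAt_taylor_two.add (Real.hasDerivAt_rpow_const (Or.inr hq1))).sub
      (hasDerivAt_one_add_rpow hq1 x)).congr_deriv (by ring)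
  have hmono : MonotoneOn g (Ici 0) := by
    refine monotoneOn_of_hasDerivWithinAt_nonneg (convex_Ici 0)
      (fun x _ => (hg x).continuousAt.continuousWithinAt)
      (fun x _ => (hg x).hasDerivWithinAt) fun x hx => ?_
    rw [interior_Ici] at hx
    have := one_add_rpow_le_one_add_mul_add_rpow (by linarith : 1 ≤ q - 1) (by linarith) hx.out.le
    nlinarith
  have := hmono self_mem_Ici ht ht
  norm_num [g, Real.zero_rpow (by linarith : q ≠ 0)] at this
  linarith

lemma one_add_rpow_le_taylor_two_of_nonpos {q t : ℝ} (hq2 : 2 ≤ q) (ht1 : -1 ≤ t)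
    (ht0 : t ≤ 0) :
    (1 + t) ^ q ≤ 1 + q * t + q * (q - 1) / 2 * t ^ 2 := by
  set g : ℝ → ℝ := fun s => 1 + q * s + q * (q - 1) / 2 * s ^ 2 - (1 + s) ^ q
  have hq1 : 1 ≤ q := by linarith
  have hg : ∀ x, HasDerivAt g (q * (1 + (q - 1) * x - (1 + x) ^ (q - 1))) x := fun x =>
    (hasDerivAt_taylor_two.sub (hasDerivAt_one_add_rpow hq1 x)).congr_deriv (by ring)
  have hanti : AntitoneOn g (Icc (-1) 0) := by
    refine antitoneOn_of_hasDerivWithinAt_nonpos (convex_Icc _ _)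
      (fun x _ => (hg x).continuousAt.continuousWithinAt)
      (fun x _ => (hg x).hasDerivWithinAt) fun x hx => ?_
    rw [interior_Icc] at hx
    have := one_add_mul_self_le_rpow_one_add hx.1.le (by linarith : 1 ≤ q - 1)
    nlinarith
  have := hanti ⟨ht1, ht0⟩ (right_mem_Icc.2 (by norm_num)) ht0
  norm_num [g] at this
  linarith

lemma one_add_rpow_le_taylor_two_add_max_rpow {q t : ℝ} (hq2 : 2 ≤ q) (hq3 : q ≤ 3)
    (ht : -1 ≤ t) : (1 + t) ^ q ≤ 1 + q * t + q * (q - 1) / 2 * t ^ 2 + (max t 0) ^ q := by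
  rcases le_total 0 t with h | h
  · rw [max_eq_left h]
    exact one_add_rpow_le_taylor_two_add_rpow hq2 hq3 h
  · rw [max_eq_right h, Real.zero_rpow (by linarith), add_zero]
    exact one_add_rpow_le_taylor_two_of_nonpos hq2 ht h

lemma add_rpow_le_taylor_two_add_max_rpow {q a b : ℝ} (hq2 : 2 ≤ q) (hq3 : q ≤ 3)
    (ha : 0 ≤ a) (hab : 0 ≤ a + b) :
    (a + b) ^ q ≤ a ^ q + q * (a ^ (q - 1) * b) + q * (q - 1) / 2 * (a ^ (q - 2) * b ^ 2)
      + (max b 0) ^ q := by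
  rcases ha.eq_or_lt with rfl | ha
  · have hb : 0 ≤ b := by linarith
    have : 0 ≤ q * (q - 1) / 2 * ((0 : ℝ) ^ (q - 2) * b ^ 2) := by
      have := Real.rpow_nonneg le_rfl (q - 2)
      have : 0 ≤ q * (q - 1) / 2 := by nlinarith
      positivity
    rw [max_eq_left hb, Real.zero_rpow (by linarith), Real.zero_rpow (by linarith), zero_add]
    linarith
  obtain ⟨t, rfl⟩ : ∃ t, b = a * t := ⟨b / a, by field_simp⟩
  have ht : -1 ≤ t := by nlinarith
  have hpow1 : a ^ (q - 1) = a ^ q / a := by rw [Real.rpow_sub_one ha.ne']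
  have hpow2 : a ^ (q - 2) = a ^ q / a ^ 2 := by rw [Real.rpow_sub ha, Real.rpow_two]
  calc (a + a * t) ^ q = a ^ q * (1 + t) ^ q := by
        rw [← Real.mul_rpow ha.le (by linarith), mul_add, mul_one]
    _ ≤ a ^ q * (1 + q * t + q * (q - 1) / 2 * t ^ 2 + (max t 0) ^ q) :=
        mul_le_mul_of_nonneg_left (one_add_rpow_le_taylor_two_add_max_rpow hq2 hq3 ht)
          (Real.rpow_nonneg ha.le q)
    _ = a ^ q + q * (a ^ (q - 1) * (a * t)) + q * (q - 1) / 2 * (a ^ (q - 2) * (a * t) ^ 2)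
          + (max (a * t) 0) ^ q := by
        have hmax : max (a * t) 0 = a * max t 0 := by rw [mul_max_of_nonneg _ _ ha.le, mul_zero]
        rw [hmax, Real.mul_rpow ha.le (le_max_right _ _), hpow1, hpow2]
        field_simp

lemma sq_le_sq_add_of_rpow_le_rpow_add {q M N D : ℝ} (hq : 2 ≤ q) (hM : 0 ≤ M) (hN : 0 < N)
    (h : M ^ q ≤ N ^ q + D) : M ^ 2 ≤ N ^ 2 + 2 / q * N ^ (2 - q) * D := by
  have hq0 : 0 < q := by linarith
  have hNq : 0 < N ^ q := Real.rpow_pos_of_pos hN q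
  have hD : -1 ≤ D / N ^ q := by
    rw [le_div_iff₀ hNq]; linarith [Real.rpow_nonneg hM q]
  calc M ^ 2 = (M ^ q) ^ (2 / q) := by
        rw [← Real.rpow_mul hM, mul_div_cancel₀ _ hq0.ne', Real.rpow_two]
    _ ≤ (N ^ q * (1 + D / N ^ q)) ^ (2 / q) := by
        rw [mul_add, mul_one, mul_div_cancel₀ _ hNq.ne']
        exact Real.rpow_le_rpow (Real.rpow_nonneg hM q) h (by positivity)
    _ = N ^ 2 * (1 + D / N ^ q) ^ (2 / q) := by
        rw [Real.mul_rpow hNq.le (by linarith), ← Real.rpow_mul hN.le,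
          mul_div_cancel₀ _ hq0.ne', Real.rpow_two]
    _ ≤ N ^ 2 * (1 + 2 / q * (D / N ^ q)) := by
        gcongr
        exact rpow_one_add_le_one_add_mul_self hD (by positivity) ((div_le_one hq0).2 hq)
    _ = N ^ 2 + 2 / q * N ^ (2 - q) * D := by
        rw [Real.rpow_sub hN, Real.rpow_two]
        field_simp

namespace MeasureTheory

variable {X : Type*} [MeasurableSpace X] {μ : Measure X}

lemma MemLp.integrable_rpow_of_nonneg {f : X → ℝ} {p : ℝ} (hf : MemLp f (ENNReal.ofReal p) μ)
    (hf0 : ∀ x, 0 ≤ f x) (hp : 0 < p) : Integrable (fun x => f x ^ p) μ := by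
  have := hf.integrable_norm_rpow (by simpa using hp) ofReal_ne_top
  simpa [toReal_ofReal hp.le, Real.norm_eq_abs, abs_of_nonneg (hf0 _)] using this

lemma MemLp.toReal_eLpNorm_rpow_eq_integral {f : X → ℝ} {p : ℝ}
    (hf : MemLp f (ENNReal.ofReal p) μ) (hf0 : ∀ x, 0 ≤ f x) (hp : 0 < p) :
    (eLpNorm f (ENNReal.ofReal p) μ).toReal ^ p = ∫ x, f x ^ p ∂μ := by
  have hI : 0 ≤ ∫ x, f x ^ p ∂μ := integral_nonneg fun x => Real.rpow_nonneg (hf0 x) p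
  rw [hf.eLpNorm_eq_integral_rpow_norm (by simpa using hp) ofReal_ne_top, toReal_ofReal hp.le,
    toReal_ofReal (by positivity), ← Real.rpow_mul (by positivity), inv_mul_cancel₀ hp.ne',
    Real.rpow_one]
  simp [Real.norm_eq_abs, abs_of_nonneg (hf0 _)]

lemma MemLp.rpow_of_nonneg {f : X → ℝ} {p a : ℝ} (hf : MemLp f (ENNReal.ofReal p) μ)
    (hf0 : ∀ x, 0 ≤ f x) (ha : 0 ≤ a) :
    MemLp (fun x => f x ^ a) (ENNReal.ofReal p / ENNReal.ofReal a) μ := by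
  simpa [toReal_ofReal ha, Real.norm_eq_abs, abs_of_nonneg (hf0 _)] using
    hf.norm_rpow_div (ENNReal.ofReal a)

lemma MemLp.sq {f : X → ℝ} {p : ℝ} (hf : MemLp f (ENNReal.ofReal p) μ) :
    MemLp (fun x => f x ^ 2) (ENNReal.ofReal p / 2) μ := by
  simpa [Real.norm_eq_abs] using hf.norm_rpow_div 2

lemma integrable_mul_of_memLp_ofReal_div {f g : X → ℝ} {p a b : ℝ} (hp : 0 < p) (ha : 0 ≤ a)
    (hb : 0 ≤ b) (hab : a + b = p) (hf : MemLp f (ENNReal.ofReal p / ENNReal.ofReal a) μ)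
    (hg : MemLp g (ENNReal.ofReal p / ENNReal.ofReal b) μ) :
    Integrable (fun x => f x * g x) μ := by
  have hp' : ENNReal.ofReal p ≠ 0 := by simpa using hp
  have : (ENNReal.ofReal p / ENNReal.ofReal a).HolderConjugate
      (ENNReal.ofReal p / ENNReal.ofReal b) := by
    rw [ENNReal.holderConjugate_iff, ENNReal.inv_div (Or.inl ofReal_ne_top) (Or.inr hp'),
      ENNReal.inv_div (Or.inl ofReal_ne_top) (Or.inr hp'), ENNReal.div_add_div_same,
      ← ENNReal.ofReal_add ha hb, hab, ENNReal.div_self hp' ofReal_ne_top]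
  exact hf.integrable_mul hg

lemma integral_add_rpow_le {q : ℝ} {u r : X → ℝ} (hq2 : 2 ≤ q) (hq3 : q ≤ 3)
    (hu : MemLp u (ENNReal.ofReal q) μ) (hr : MemLp r (ENNReal.ofReal q) μ)
    (hu0 : ∀ x, 0 ≤ u x) (hur : ∀ x, 0 ≤ u x + r x)
    (horth : ∫ x, u x ^ (q - 1) * r x ∂μ = 0) :
    ∫ x, (u x + r x) ^ q ∂μ ≤ ∫ x, u x ^ q ∂μ
      + q * (q - 1) / 2 * ∫ x, u x ^ (q - 2) * r x ^ 2 ∂μ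
      + ∫ x, (max (r x) 0) ^ q ∂μ := by
  have hq0 : 0 < q := by linarith
  have i0 := hu.integrable_rpow_of_nonneg hu0 hq0
  have i1 : Integrable (fun x => u x ^ (q - 1) * r x) μ :=
    integrable_mul_of_memLp_ofReal_div hq0 (by linarith) zero_le_one (by ring)
      (hu.rpow_of_nonneg hu0 (by linarith)) (by simpa using hr)
  have i2 : Integrable (fun x => u x ^ (q - 2) * r x ^ 2) μ :=
    integrable_mul_of_memLp_ofReal_div hq0 (by linarith) zero_le_two (by ring)
      (hu.rpow_of_nonneg hu0 (by linarith)) (by simpa using hr.sq)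
  have i3 := hr.pos_part.integrable_rpow_of_nonneg (fun x => le_max_right _ 0) hq0
  calc ∫ x, (u x + r x) ^ q ∂μ ≤ ∫ x, (u x ^ q + q * (u x ^ (q - 1) * r x)
        + q * (q - 1) / 2 * (u x ^ (q - 2) * r x ^ 2) + (max (r x) 0) ^ q) ∂μ :=
      integral_mono ((hu.add hr).integrable_rpow_of_nonneg hur hq0)
        (((i0.add (i1.const_mul q)).add (i2.const_mul _)).add i3)
        fun x => add_rpow_le_taylor_two_add_max_rpow hq2 hq3 (hu0 x) (hur x)
    _ = _ := by
      rw [integral_add (by fun_prop) i3, integral_add (by fun_prop) (i2.const_mul _),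
        integral_add i0 (i1.const_mul q), integral_const_mul, integral_const_mul, horth]
      ring

end MeasureTheory

theorem lq_norm_sq_expansion_q_two_three {X : Type*} [MeasurableSpace X]
    (μ : Measure X) (q : ℝ) (hq2 : 2 ≤ q) (hq3 : q ≤ 3)
    (u r : X → ℝ)
    (hu : MemLp u (ENNReal.ofReal q) μ) (hr : MemLp r (ENNReal.ofReal q) μ)
    (hu0 : ∀ x, 0 ≤ u x) (hur : ∀ x, 0 ≤ u x + r x)
    (hune : ¬ u =ᵐ[μ] 0)
    (horth : ∫ x, (u x) ^ (q - 1) * r x ∂μ = 0) :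
    (eLpNorm (u + r) (ENNReal.ofReal q) μ).toReal ^ 2
      ≤ (eLpNorm u (ENNReal.ofReal q) μ).toReal ^ 2
        + (eLpNorm u (ENNReal.ofReal q) μ).toReal ^ (2 - q)
          * ((q - 1) * ∫ x, (u x) ^ (q - 2) * (r x) ^ 2 ∂μ
             + (2 / q) * ∫ x, (max (r x) 0) ^ q ∂μ) := by
  have hq0 : 0 < q := by linarith
  have hN : 0 < (eLpNorm u (ENNReal.ofReal q) μ).toReal :=
    ENNReal.toReal_pos (fun h => hune ((eLpNorm_eq_zero_iff hu.1 (by simpa using hq0)).1 h))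
      hu.2.ne
  have hM : (eLpNorm (u + r) (ENNReal.ofReal q) μ).toReal ^ q = ∫ x, (u x + r x) ^ q ∂μ :=
    (hu.add hr).toReal_eLpNorm_rpow_eq_integral hur hq0
  have key := integral_add_rpow_le hq2 hq3 hu hr hu0 hur horth
  rw [← hM, ← hu.toReal_eLpNorm_rpow_eq_integral hu0 hq0, add_assoc] at key
  calc _ ≤ _ := sq_le_sq_add_of_rpow_le_rpow_add hq2 toReal_nonneg hN key
    _ = _ := by field_simp
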